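/- The Dorfman bracket satisfies the Leibniz (Jacobi-type) identity [x,[y,z]] = [[x,y],z] + [y,[x,z]] for all sections x, y, z of TM ⊕ T*M. -/

import Mathlib

/-!
The vector-field component of the Leibniz identity is the Jacobi identity for derivations.
The one-form component is additive in each of the forms `α, β, γ` of `x, y, z`, and each of the
three parts is a Cartan identity: `L_[X,Y] γ = [L_X, L_Y] γ`, `i_[X,Z] dβ = [L_X, i_Z d] β`, and
`i_Z d i_Y dα = i_Z L_Y dα`, which rewrites as `L_Y i_Z dα − i_[Y,Z] dα`.
-/

noncomputable section

variable {A : Type*} [CommRing A] [Algebra ℝ A]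

/-- One-forms in the algebraic (Lie–Rinehart) model of a smooth manifold:
`A`-linear functionals on vector fields (= derivations of `A`). -/
abbrev OneForm (A : Type*) [CommRing A] [Algebra ℝ A] :=
  Derivation ℝ A A →ₗ[A] A

lemma bracket_smul (a : A) (X Y : Derivation ℝ A A) :
    ⁅X, a • Y⁆ = a • ⁅X, Y⁆ + (X a) • Y := by
  ext b
  simp only [Derivation.commutator_apply, Derivation.add_apply, Derivation.smul_apply,
    smul_eq_mul, Derivation.leibniz]
  ring

/-- The exterior differential of a function, as a one-form. -/
def dA (f : A) : OneForm A where
  toFun X := X f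
  map_add' X Y := rfl
  map_smul' a X := rfl

/-- The Lie derivative of a one-form along a vector field:
`(L_X β)(Y) = X(β(Y)) − β([X,Y])`. -/
def lieD (X : Derivation ℝ A A) (β : OneForm A) : OneForm A where
  toFun Y := X (β Y) - β ⁅X, Y⁆
  map_add' Y Z := by simp only [map_add, lie_add]; ring
  map_smul' a Y := by
    simp only [map_smul, bracket_smul, map_add, smul_eq_mul, Derivation.leibniz,
      RingHom.id_apply]
    ring

/-- The contraction `i_Y dα`, where `dα(Y,Z) = Y(α(Z)) − Z(α(Y)) − α([Y,Z])`. -/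
def iddD (Y : Derivation ℝ A A) (α : OneForm A) : OneForm A where
  toFun Z := Y (α Z) - Z (α Y) - α ⁅Y, Z⁆
  map_add' Z W := by simp only [map_add, lie_add, Derivation.add_apply]; ring
  map_smul' a Z := by
    simp only [map_smul, bracket_smul, map_add, smul_eq_mul, Derivation.leibniz,
      RingHom.id_apply, Derivation.smul_apply]
    ring

/-- Sections of the generalized tangent bundle `TM ⊕ T*M`. -/
abbrev GSec (A : Type*) [CommRing A] [Algebra ℝ A] :=
  Derivation ℝ A A × OneForm A

/-- The canonical pairing `⟨X+α, Y+β⟩ = (α(Y)+β(X))/2`. -/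
def pairG (x y : GSec A) : A := ((1:ℝ)/2) • (x.2 y.1 + y.2 x.1)

/-- The Dorfman bracket `[X+α, Y+β] = [X,Y] + L_X β − i_Y dα`. -/
def dorf (x y : GSec A) : GSec A :=
  (⁅x.1, y.1⁆, lieD x.1 y.2 - iddD y.1 x.2)

section CartanCalculus

variable (X Y Z : Derivation ℝ A A) (α β : OneForm A)

lemma lieD_sub : lieD X (α - β) = lieD X α - lieD X β := by
  ext W
  simp only [lieD, LinearMap.sub_apply, LinearMap.coe_mk, AddHom.coe_mk, map_sub]
  ring

lemma iddD_sub : iddD Y (α - β) = iddD Y α - iddD Y β := by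
  ext W
  simp only [iddD, LinearMap.sub_apply, LinearMap.coe_mk, AddHom.coe_mk, map_sub]
  ring

lemma lieD_lie : lieD ⁅X, Y⁆ α = lieD X (lieD Y α) - lieD Y (lieD X α) := by
  ext W
  simp only [lieD, LinearMap.sub_apply, LinearMap.coe_mk, AddHom.coe_mk, map_add, map_sub,
    Derivation.commutator_apply, leibniz_lie X Y W]
  ring

lemma iddD_lie : iddD ⁅X, Y⁆ α = lieD X (iddD Y α) - iddD Y (lieD X α) := by
  ext W
  simp only [lieD, iddD, LinearMap.sub_apply, LinearMap.coe_mk, AddHom.coe_mk, map_add, map_sub,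
    Derivation.commutator_apply, leibniz_lie X Y W]
  ring

-- `d i_Y dα = L_Y dα` because `d² = 0`.
lemma iddD_iddD : iddD Z (iddD Y α) = lieD Y (iddD Z α) - iddD ⁅Y, Z⁆ α := by
  ext W
  simp only [lieD, iddD, LinearMap.sub_apply, LinearMap.coe_mk, AddHom.coe_mk, map_add, map_sub,
    Derivation.commutator_apply, leibniz_lie Y Z W]
  ring

end CartanCalculus

/-- the Dorfman bracket satisfies the Leibniz (Jacobi-type) identity
`[x,[y,z]] = [[x,y],z] + [y,[x,z]]`. -/
theorem dorfman_leibniz (x y z : GSec A) :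
    dorf x (dorf y z) = dorf (dorf x y) z + dorf y (dorf x z) := by
  obtain ⟨X, α⟩ := x
  obtain ⟨Y, β⟩ := y
  obtain ⟨Z, γ⟩ := z
  refine Prod.ext (leibniz_lie X Y Z) ?_
  simp only [dorf, Prod.snd_add, lieD_sub, iddD_sub, lieD_lie, iddD_lie X Z, iddD_iddD]
  abel
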